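/- arXiv:1803.02672 — 2 statements merged into one kernel-verified Lean document; each statement's English description precedes it below -/
import Mathlib

section
/- Let d ∈ ℕ*, α ∈ (0,2), and j ∈ ℝ with 0 < 2j < min(α,1). Then there exists a constant C > 0 such that for all x ∈ ℝ^d, ∫_{ℝ^d} (⟨y⟩^j − ⟨x⟩^j)² / |y−x|^{d+α} dy ≤ C ⟨x⟩^{2j−α}. -/
/-!
Split the integral at `|y - x| = ⟨x⟩ / 2`. Near `x`, `⟨y⟩` is comparable to `⟨x⟩` and
`t ↦ √(1 + t²)` is 1-Lipschitz, so concavity of `t ↦ t ^ j` gives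
`(⟨y⟩^j - ⟨x⟩^j)² ≲ ⟨x⟩^(2j-2) |y - x|²`, whose quotient by `|y - x|^(d+α)` is integrable
on the ball because `α < 2`. Far from `x`, both brackets are `≲ |y - x|`, so the numerator is
`≲ |y - x|^(2j)`, integrable on the complement because `2j < α`. In polar coordinates both
pieces are explicit powers of the radius `⟨x⟩ / 2`, and they add up to a multiple of
`⟨x⟩^(2j-α)`.
-/

open MeasureTheory

/-- Japanese bracket `⟨x⟩ = (1+|x|²)^{1/2}`. -/
noncomputable def jb {d : ℕ} (x : EuclideanSpace ℝ (Fin d)) : ℝ := Real.sqrt (1 + ‖x‖ ^ 2)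

open Set Metric Module Real
open scoped ENNReal

lemma rpow_sub_rpow_le_mul_rpow_sub_one {p q e : ℝ} (hp : 0 < p) (hpq : p ≤ q) (he0 : 0 ≤ e)
    (he1 : e ≤ 1) : q ^ e - p ^ e ≤ e * p ^ (e - 1) * (q - p) := by
  have bernoulli : (q / p) ^ e ≤ 1 + e * (q / p - 1) := by
    simpa using rpow_one_add_le_one_add_mul_self (s := q / p - 1)
      (by linarith [(one_le_div hp).2 hpq]) he0 he1
  have hq : q ^ e = p ^ e * (q / p) ^ e := by
    rw [← mul_rpow hp.le (div_pos (hp.trans_le hpq) hp).le, mul_div_cancel₀ _ hp.ne']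
  have hpe : p ^ e = p ^ (e - 1) * p := by rw [rpow_sub_one hp.ne', div_mul_cancel₀ _ hp.ne']
  calc q ^ e - p ^ e = p ^ e * ((q / p) ^ e - 1) := by rw [hq]; ring
    _ ≤ p ^ e * (e * (q / p - 1)) := by gcongr; linarith
    _ = e * p ^ (e - 1) * (q - p) := by rw [hpe]; field_simp

lemma abs_rpow_sub_rpow_le {a b e : ℝ} (ha : 0 < a) (hb : 0 < b) (he0 : 0 ≤ e) (he1 : e ≤ 1) :
    |b ^ e - a ^ e| ≤ e * min a b ^ (e - 1) * |b - a| := by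
  rcases le_total a b with h | h
  · rw [min_eq_left h, abs_of_nonneg (sub_nonneg.2 (rpow_le_rpow ha.le h he0)),
      abs_of_nonneg (sub_nonneg.2 h)]
    exact rpow_sub_rpow_le_mul_rpow_sub_one ha h he0 he1
  · rw [min_eq_right h, abs_sub_comm, abs_of_nonneg (sub_nonneg.2 (rpow_le_rpow hb.le h he0)),
      abs_sub_comm, abs_of_nonneg (sub_nonneg.2 h)]
    exact rpow_sub_rpow_le_mul_rpow_sub_one hb h he0 he1

lemma sq_rpow_sub_rpow_le_of_le_half {a b r e : ℝ} (ha : 0 < a) (hb : 0 < b) (he0 : 0 ≤ e)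
    (he1 : e ≤ 1) (hab : |b - a| ≤ r) (hr : r ≤ a / 2) :
    (b ^ e - a ^ e) ^ 2 ≤ 4 * a ^ (2 * e - 2) * r ^ 2 := by
  have hmin : a / 2 ≤ min a b := le_min (by linarith) (by linarith [(abs_le.1 hab).1])
  have hpow : min a b ^ (e - 1) ≤ 2 * a ^ (e - 1) :=
    calc min a b ^ (e - 1) ≤ (a / 2) ^ (e - 1) :=
          rpow_le_rpow_of_nonpos (by positivity) hmin (by linarith)
      _ = 2 ^ (1 - e) * a ^ (e - 1) := by
          rw [div_rpow ha.le zero_le_two, div_eq_mul_inv, ← rpow_neg zero_le_two, neg_sub,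
            mul_comm]
      _ ≤ 2 * a ^ (e - 1) := by
          gcongr
          exact rpow_le_self_of_one_le one_le_two (by linarith)
  have hdiff : |b ^ e - a ^ e| ≤ 2 * a ^ (e - 1) * r :=
    calc |b ^ e - a ^ e| ≤ e * min a b ^ (e - 1) * |b - a| := abs_rpow_sub_rpow_le ha hb he0 he1
      _ ≤ 1 * (2 * a ^ (e - 1)) * r := by gcongr
      _ = 2 * a ^ (e - 1) * r := by ring
  calc (b ^ e - a ^ e) ^ 2 = |b ^ e - a ^ e| ^ 2 := (sq_abs _).symm
    _ ≤ (2 * a ^ (e - 1) * r) ^ 2 := by gcongr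
    _ = 4 * a ^ (2 * e - 2) * r ^ 2 := by
      rw [mul_pow, mul_pow, ← rpow_mul_natCast ha.le]
      ring_nf

lemma sq_rpow_sub_rpow_le_of_half_le {a b r e : ℝ} (ha : 0 < a) (hb : 0 < b) (he : 0 ≤ e)
    (hab : |b - a| ≤ r) (hr : a ≤ 2 * r) :
    (b ^ e - a ^ e) ^ 2 ≤ 3 ^ (2 * e) * r ^ (2 * e) := by
  have hr0 : 0 ≤ r := (abs_nonneg _).trans hab
  have ha3 : a ^ e ≤ (3 * r) ^ e := rpow_le_rpow ha.le (by linarith) he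
  have hb3 : b ^ e ≤ (3 * r) ^ e := rpow_le_rpow hb.le (by linarith [(abs_le.1 hab).2]) he
  have hdiff : |b ^ e - a ^ e| ≤ (3 * r) ^ e :=
    abs_sub_le_iff.2 ⟨by linarith [rpow_nonneg ha.le e], by linarith [rpow_nonneg hb.le e]⟩
  calc (b ^ e - a ^ e) ^ 2 = |b ^ e - a ^ e| ^ 2 := (sq_abs _).symm
    _ ≤ ((3 * r) ^ e) ^ 2 := by gcongr
    _ = 3 ^ (2 * e) * r ^ (2 * e) := by
      rw [← rpow_mul_natCast (by positivity), mul_rpow zero_le_three hr0, Nat.cast_ofNat, mul_comm e]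

lemma div_rpow_le_mul_rpow_sub {u K r p s : ℝ} (hr : 0 ≤ r) (hK : 0 ≤ K) (hs : s ≠ 0)
    (hu : u ≤ K * r ^ p) : u / r ^ s ≤ K * r ^ (p - s) := by
  rcases hr.eq_or_lt with rfl | hr
  · rw [zero_rpow hs, div_zero]
    positivity
  · rw [rpow_sub hr, ← mul_div_assoc]
    gcongr

lemma sqrt_one_add_sq_le_add {s t : ℝ} (ht : 0 ≤ t) : √(1 + s ^ 2) ≤ √(1 + t ^ 2) + |s - t| := by
  have hst : |s| ≤ t + |s - t| := by
    simpa [abs_of_nonneg ht] using abs_add_le t (s - t)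
  have ht' : t ≤ √(1 + t ^ 2) := le_sqrt_of_sq_le (by linarith)
  rw [sqrt_le_left (by positivity)]
  nlinarith [sq_sqrt (show 0 ≤ 1 + t ^ 2 by positivity), sq_abs s, abs_nonneg s,
    abs_nonneg (s - t)]

lemma lintegral_Ioc_rpow_sub_one {R q : ℝ} (hR : 0 < R) (hq : 0 < q) :
    ∫⁻ y in Ioc 0 R, ENNReal.ofReal (y ^ (q - 1)) = ENNReal.ofReal (R ^ q / q) := by
  have hint : IntegrableOn (fun y : ℝ ↦ y ^ (q - 1)) (Ioc 0 R) := by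
    rw [← intervalIntegrable_iff_integrableOn_Ioc_of_le hR.le]
    exact intervalIntegral.intervalIntegrable_rpow' (by linarith)
  rw [← ofReal_integral_eq_lintegral_ofReal hint, ← intervalIntegral.integral_of_le hR.le,
    integral_rpow (Or.inl (by linarith)), sub_add_cancel, zero_rpow hq.ne', sub_zero]
  filter_upwards [ae_restrict_mem measurableSet_Ioc] with y hy
  exact rpow_nonneg hy.1.le _

lemma lintegral_Ioi_rpow_sub_one {R q : ℝ} (hR : 0 < R) (hq : q < 0) :
    ∫⁻ y in Ioi R, ENNReal.ofReal (y ^ (q - 1)) = ENNReal.ofReal (R ^ q / -q) := by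
  rw [← ofReal_integral_eq_lintegral_ofReal (integrableOn_Ioi_rpow_of_lt (by linarith) hR),
    integral_Ioi_rpow_of_lt (by linarith) hR, sub_add_cancel, neg_div, div_neg]
  filter_upwards [ae_restrict_mem measurableSet_Ioi] with y hy
  exact rpow_nonneg (hR.trans hy).le _

lemma ofReal_pow_pred_mul_ofReal_rpow {y q : ℝ} {n : ℕ} (hy : 0 < y) (hn : 0 < n) :
    ENNReal.ofReal (y ^ (n - 1)) * ENNReal.ofReal (y ^ (q - n)) = ENNReal.ofReal (y ^ (q - 1)) := by
  rw [← ENNReal.ofReal_mul (by positivity), ← rpow_natCast, ← rpow_add hy, Nat.cast_pred hn]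
  ring_nf

lemma finrank_mul_measure_ball_eq_ofReal {E : Type*} [NormedAddCommGroup E] [NormedSpace ℝ E]
    [MeasurableSpace E] [FiniteDimensional ℝ E] (μ : Measure E) [μ.IsAddHaarMeasure] :
    (finrank ℝ E : ℝ≥0∞) * μ (ball 0 1) = ENNReal.ofReal (finrank ℝ E * μ.real (ball 0 1)) := by
  rw [ENNReal.ofReal_mul (by positivity), ENNReal.ofReal_natCast,
    ofReal_measureReal measure_ball_lt_top.ne]

section Radial

variable {E : Type*} [NormedAddCommGroup E] [NormedSpace ℝ E] [MeasurableSpace E] [BorelSpace E]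
  [FiniteDimensional ℝ E] [Nontrivial E] (μ : Measure E) [μ.IsAddHaarMeasure]

lemma lintegral_fun_norm_addHaar (f : ℝ → ℝ≥0∞) (hf : Measurable f) :
    ∫⁻ x, f ‖x‖ ∂μ = finrank ℝ E * μ (ball 0 1) *
      ∫⁻ y in Ioi (0 : ℝ), ENNReal.ofReal (y ^ (finrank ℝ E - 1)) * f y := by
  have hf₂ : Measurable fun p : sphere (0 : E) 1 × Ioi (0 : ℝ) ↦ f p.2 :=
    hf.comp (measurable_subtype_coe.comp measurable_snd)
  calc
    ∫⁻ x, f ‖x‖ ∂μ = ∫⁻ x : ({0}ᶜ : Set E), f ‖x.1‖ ∂(μ.comap (↑)) := by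
      rw [lintegral_subtype_comap (measurableSet_singleton _).compl fun x ↦ f ‖x‖,
        restrict_compl_singleton]
    _ = ∫⁻ x : sphere (0 : E) 1 × Ioi (0 : ℝ), f x.2
        ∂μ.toSphere.prod (.volumeIoiPow (finrank ℝ E - 1)) := by
      rw [← μ.measurePreserving_homeomorphUnitSphereProd.lintegral_comp hf₂]
      simp [homeomorphUnitSphereProd_apply_snd_coe]
    _ = μ.toSphere univ * ∫⁻ r : Ioi (0 : ℝ), f r ∂(.volumeIoiPow (finrank ℝ E - 1)) := by
      rw [lintegral_prod _ hf₂.aemeasurable]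
      simp [lintegral_const, mul_comm]
    _ = _ := by
      rw [Measure.toSphere_apply_univ, mul_assoc, Measure.volumeIoiPow,
        lintegral_withDensity_eq_lintegral_mul _
          (f := fun r : Ioi (0 : ℝ) ↦ ENNReal.ofReal (r.1 ^ (finrank ℝ E - 1))) (by fun_prop)
          (g := fun r : Ioi (0 : ℝ) ↦ f r.1) (hf.comp measurable_subtype_coe),
        ← lintegral_subtype_comap measurableSet_Ioi, ← mul_assoc]
      rfl

lemma setLIntegral_norm_preimage_addHaar (f : ℝ → ℝ≥0∞) (hf : Measurable f) {s : Set ℝ}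
    (hs : MeasurableSet s) :
    ∫⁻ x in (‖·‖) ⁻¹' s, f ‖x‖ ∂μ = finrank ℝ E * μ (ball 0 1) *
      ∫⁻ y in Ioi 0 ∩ s, ENNReal.ofReal (y ^ (finrank ℝ E - 1)) * f y := by
  have hind : ((‖·‖) ⁻¹' s).indicator (fun x : E ↦ f ‖x‖) = fun x ↦ s.indicator f ‖x‖ :=
    funext fun _ ↦ indicator_comp_right (g := f) (‖·‖)
  rw [← lintegral_indicator (measurable_norm hs), hind,
    lintegral_fun_norm_addHaar μ _ (hf.indicator hs), inter_comm, ← Measure.restrict_restrict hs]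
  simp_rw [← indicator_mul_right s (fun y ↦ ENNReal.ofReal (y ^ (finrank ℝ E - 1))) f]
  rw [lintegral_indicator hs]

lemma lintegral_closedBall_norm_rpow {R q : ℝ} (hR : 0 < R) (hq : 0 < q) :
    ∫⁻ x in closedBall 0 R, ENNReal.ofReal (‖x‖ ^ (q - finrank ℝ E)) ∂μ =
      ENNReal.ofReal (finrank ℝ E * μ.real (ball 0 1) * (R ^ q / q)) := by
  have hball : closedBall (0 : E) R = (‖·‖) ⁻¹' Iic R := by ext; simp
  rw [hball, setLIntegral_norm_preimage_addHaar μ (fun y ↦ ENNReal.ofReal (y ^ (q - finrank ℝ E)))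
    (by fun_prop) measurableSet_Iic,
    Ioi_inter_Iic, setLIntegral_congr_fun measurableSet_Ioc fun y hy ↦
      ofReal_pow_pred_mul_ofReal_rpow hy.1 finrank_pos,
    lintegral_Ioc_rpow_sub_one hR hq, finrank_mul_measure_ball_eq_ofReal,
    ← ENNReal.ofReal_mul (by positivity)]

lemma lintegral_compl_closedBall_norm_rpow {R q : ℝ} (hR : 0 < R) (hq : q < 0) :
    ∫⁻ x in (closedBall 0 R)ᶜ, ENNReal.ofReal (‖x‖ ^ (q - finrank ℝ E)) ∂μ =
      ENNReal.ofReal (finrank ℝ E * μ.real (ball 0 1) * (R ^ q / -q)) := by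
  have hball : (closedBall (0 : E) R)ᶜ = (‖·‖) ⁻¹' Ioi R := by ext; simp
  rw [hball, setLIntegral_norm_preimage_addHaar μ (fun y ↦ ENNReal.ofReal (y ^ (q - finrank ℝ E)))
    (by fun_prop) measurableSet_Ioi,
    Ioi_inter_Ioi, max_eq_right hR.le, setLIntegral_congr_fun measurableSet_Ioi fun y hy ↦
      ofReal_pow_pred_mul_ofReal_rpow (hR.trans hy) finrank_pos,
    lintegral_Ioi_rpow_sub_one hR hq, finrank_mul_measure_ball_eq_ofReal,
    ← ENNReal.ofReal_mul (by positivity)]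

end Radial

section JapaneseBracket

variable {d : ℕ} {α j : ℝ}

lemma one_le_jb (x : EuclideanSpace ℝ (Fin d)) : 1 ≤ jb x :=
  one_le_sqrt.2 (by simp)

lemma abs_jb_sub_jb_le (x y : EuclideanSpace ℝ (Fin d)) : |jb y - jb x| ≤ ‖y - x‖ := by
  have hyx := sqrt_one_add_sq_le_add (s := ‖y‖) (norm_nonneg x)
  have hxy := sqrt_one_add_sq_le_add (s := ‖x‖) (norm_nonneg y)
  rw [abs_sub_comm ‖x‖] at hxy
  have := abs_norm_sub_norm_le y x
  rw [abs_sub_le_iff]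
  constructor <;> unfold jb <;> linarith

lemma jb_pos (x : EuclideanSpace ℝ (Fin d)) : 0 < jb x := one_pos.trans_le (one_le_jb x)

lemma abs_jb_add_sub_jb_le (x z : EuclideanSpace ℝ (Fin d)) : |jb (z + x) - jb x| ≤ ‖z‖ := by
  simpa using abs_jb_sub_jb_le x (z + x)

lemma jb_kernel_le_of_norm_le (hj0 : 0 ≤ j) (hj1 : j ≤ 1) (hα : 0 < α)
    {x z : EuclideanSpace ℝ (Fin d)} (hz : ‖z‖ ≤ jb x / 2) :
    (jb (z + x) ^ j - jb x ^ j) ^ 2 / ‖z‖ ^ ((d : ℝ) + α) ≤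
      4 * jb x ^ (2 * j - 2) * ‖z‖ ^ ((2 - α) - d) := by
  have h := sq_rpow_sub_rpow_le_of_le_half (jb_pos x) (jb_pos _) hj0 hj1
    (abs_jb_add_sub_jb_le x z) hz
  have ha := jb_pos x
  rw [← rpow_natCast ‖z‖ 2, Nat.cast_ofNat] at h
  rw [show (2 - α) - d = (2 : ℝ) - (d + α) by ring]
  exact div_rpow_le_mul_rpow_sub (norm_nonneg z) (by positivity) (by positivity) h

lemma jb_kernel_le_of_lt_norm (hj0 : 0 ≤ j) (hα : 0 < α)
    {x z : EuclideanSpace ℝ (Fin d)} (hz : jb x / 2 < ‖z‖) :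
    (jb (z + x) ^ j - jb x ^ j) ^ 2 / ‖z‖ ^ ((d : ℝ) + α) ≤
      3 ^ (2 * j) * ‖z‖ ^ ((2 * j - α) - d) := by
  have h := sq_rpow_sub_rpow_le_of_half_le (jb_pos x) (jb_pos _) hj0
    (abs_jb_add_sub_jb_le x z) (by linarith)
  rw [show (2 * j - α) - d = 2 * j - (d + α) by ring]
  exact div_rpow_le_mul_rpow_sub (norm_nonneg z) (by positivity) (by positivity) h

lemma lintegral_jb_kernel_le [NeZero d] (hj0 : 0 ≤ j) (hj1 : j ≤ 1) (hα : 0 < α) (hα2 : α < 2)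
    (hjα : 2 * j < α) (x : EuclideanSpace ℝ (Fin d)) :
    ∫⁻ y, ENNReal.ofReal ((jb y ^ j - jb x ^ j) ^ 2 / ‖y - x‖ ^ ((d : ℝ) + α)) ≤
      ENNReal.ofReal (4 * jb x ^ (2 * j - 2) *
          (d * volume.real (ball (0 : EuclideanSpace ℝ (Fin d)) 1) *
            ((jb x / 2) ^ (2 - α) / (2 - α)))) +
        ENNReal.ofReal (3 ^ (2 * j) *
          (d * volume.real (ball (0 : EuclideanSpace ℝ (Fin d)) 1) *
            ((jb x / 2) ^ (2 * j - α) / (α - 2 * j)))) := by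
  set K : EuclideanSpace ℝ (Fin d) → ℝ≥0∞ := fun z ↦
    ENNReal.ofReal ((jb (z + x) ^ j - jb x ^ j) ^ 2 / ‖z‖ ^ ((d : ℝ) + α))
  have ha := jb_pos x
  have hR : 0 < jb x / 2 := half_pos ha
  have hnear : ∀ z ∈ closedBall 0 (jb x / 2), K z ≤
      ENNReal.ofReal (4 * jb x ^ (2 * j - 2)) * ENNReal.ofReal (‖z‖ ^ ((2 - α) - d)) := by
    intro z hz
    rw [← ENNReal.ofReal_mul (by positivity)]
    exact ENNReal.ofReal_le_ofReal
      (jb_kernel_le_of_norm_le hj0 hj1 hα (mem_closedBall_zero_iff.1 hz))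
  have hfar : ∀ z ∈ (closedBall 0 (jb x / 2))ᶜ, K z ≤
      ENNReal.ofReal (3 ^ (2 * j)) * ENNReal.ofReal (‖z‖ ^ ((2 * j - α) - d)) := by
    intro z hz
    rw [← ENNReal.ofReal_mul (by positivity)]
    exact ENNReal.ofReal_le_ofReal
      (jb_kernel_le_of_lt_norm hj0 hα (by simpa using hz))
  have hball := lintegral_closedBall_norm_rpow (volume : Measure (EuclideanSpace ℝ (Fin d)))
    hR (q := 2 - α) (by linarith)
  have hcompl := lintegral_compl_closedBall_norm_rpow
    (volume : Measure (EuclideanSpace ℝ (Fin d))) hR (q := 2 * j - α) (by linarith)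
  rw [finrank_euclideanSpace_fin] at hball hcompl
  rw [neg_sub] at hcompl
  calc ∫⁻ y, ENNReal.ofReal ((jb y ^ j - jb x ^ j) ^ 2 / ‖y - x‖ ^ ((d : ℝ) + α))
      = ∫⁻ z, K z := by
        rw [← lintegral_add_right_eq_self _ x]
        simp only [K, add_sub_cancel_right]
    _ = (∫⁻ z in closedBall 0 (jb x / 2), K z) + ∫⁻ z in (closedBall 0 (jb x / 2))ᶜ, K z :=
      (lintegral_add_compl _ measurableSet_closedBall).symm
    _ ≤ _ := by
      gcongr
      · refine (setLIntegral_mono' measurableSet_closedBall hnear).trans_eq ?_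
        rw [lintegral_const_mul' _ _ ENNReal.ofReal_ne_top, hball,
          ← ENNReal.ofReal_mul (by positivity)]
      · refine (setLIntegral_mono' measurableSet_closedBall.compl hfar).trans_eq ?_
        rw [lintegral_const_mul' _ _ ENNReal.ofReal_ne_top, hcompl,
          ← ENNReal.ofReal_mul (by positivity)]

end JapaneseBracket

theorem stmt4 (d : ℕ) (hd : 0 < d) (α j : ℝ) (hα : 0 < α ∧ α < 2)
    (hj : 0 < 2 * j ∧ 2 * j < min α 1) :
    ∃ C : ℝ, 0 < C ∧ ∀ x : EuclideanSpace ℝ (Fin d),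
      ∫⁻ y : EuclideanSpace ℝ (Fin d),
          ENNReal.ofReal ((jb y ^ j - jb x ^ j) ^ 2 / ‖y - x‖ ^ ((d : ℝ) + α)) ≤
        ENNReal.ofReal (C * jb x ^ (2 * j - α)) := by
  obtain ⟨hα0, hα2⟩ := hα
  obtain ⟨hj0, hjm⟩ := hj
  have hjα : 2 * j < α := hjm.trans_le (min_le_left _ _)
  have : NeZero d := ⟨hd.ne'⟩
  have hV : 0 < volume.real (ball (0 : EuclideanSpace ℝ (Fin d)) 1) :=
    ENNReal.toReal_pos (measure_ball_pos _ _ one_pos).ne' measure_ball_lt_top.ne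
  refine ⟨d * volume.real (ball (0 : EuclideanSpace ℝ (Fin d)) 1) *
    (4 / (2 ^ (2 - α) * (2 - α)) + 3 ^ (2 * j) / (2 ^ (2 * j - α) * (α - 2 * j))),
    by have := sub_pos.2 hα2; have := sub_pos.2 hjα; positivity, fun x ↦ ?_⟩
  refine (lintegral_jb_kernel_le (by linarith) (by linarith) hα0 hα2 hjα x).trans_eq ?_
  have ha := jb_pos x
  rw [← ENNReal.ofReal_add (by positivity) (by positivity)]
  congr 1
  rw [div_rpow ha.le zero_le_two, div_rpow ha.le zero_le_two,
    show jb x ^ (2 * j - α) = jb x ^ (2 * j - 2) * jb x ^ (2 - α) by rw [← rpow_add ha]; ring_nf]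
  field_simp
end

section
/- Let d ∈ ℕ*, α ∈ (0,2), p ∈ (1,∞) with q = p/(p−1), let μ ∈ L^1(ℝ^d) be nonnegative and locally bounded, and let Ω ⊂ ℝ^d be a bounded measurable set with μ(Ω) := ∫_Ω μ > 0. Then for every measurable v : ℝ^d → ℝ with ∫_{ℝ^d} |v|^p μ < ∞ and ∫_{ℝ^d} v μ = 0: ∫_Ω |v|^p μ ≤ C_{PW} ∫_Ω D_p(v) μ + ε_Ω ‖v‖_{L^p_μ(Ω)}^{p−1} ‖v‖_{L^p_μ(Ω^c)}, where C_{PW} := diam(Ω)^{d+α} ‖μ‖_{L^∞(Ω)} / μ(Ω), ε_Ω := (μ(Ω^c)/μ(Ω))^{1/q}, ‖v‖_{L^p_μ(A)}^p := ∫_A |v|^p μ, and D_p(v)(x) := (1/2)∫_{ℝ^d} (v(y)−v(x))(v(y)^{p−1}−v(x)^{p−1}) / |y−x|^{d+α} dy. -/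
open MeasureTheory
open scoped ENNReal

/-!
Write `m = μ(Ω)`, `a = ∫_Ω v μ` and `b = ∫_Ω v^{p-1} μ`. Expanding the product gives
`∫_Ω ∫_Ω (v(y) - v(x)) (v(y)^{p-1} - v(x)^{p-1}) μ(y) μ(x) = 2 (m ∫_Ω |v|^p μ - a b)`.
On `Ω × Ω` we have `|y - x| ≤ diam Ω` and `μ ≤ ‖μ‖_{L^∞(Ω)}`, so the left side is at most
`2 diam(Ω)^{d+α} ‖μ‖_{L^∞(Ω)} ∫_Ω D_p(v) μ`. Since `v` has zero `μ`-mean,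
`a = -∫_{Ωᶜ} v μ`, and Hölder's inequality on `Ωᶜ` and on `Ω` bounds the cross term `a b`
by `m ε_Ω ‖v‖_{L^p_μ(Ω)}^{p-1} ‖v‖_{L^p_μ(Ωᶜ)}`. Dividing by `m` gives the inequality.
-/

/-- Signed power: `z ^ a := |z| ^ (a-1) * z`, with `0 ^ a = 0`. -/
noncomputable def sgnPow (a z : ℝ) : ℝ := |z| ^ (a - 1) * z

lemma sgnPow_neg (a z : ℝ) : sgnPow a (-z) = -sgnPow a z := by
  simp only [sgnPow, abs_neg, mul_neg]

lemma sgnPow_of_pos {a z : ℝ} (hz : 0 < z) : sgnPow a z = z ^ a := by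
  rw [sgnPow, abs_of_pos hz, ← Real.rpow_add_one hz.ne', sub_add_cancel]

lemma sgnPow_zero (a : ℝ) : sgnPow a 0 = 0 := by simp [sgnPow]

lemma sgnPow_nonneg {a z : ℝ} (hz : 0 ≤ z) : 0 ≤ sgnPow a z := by
  unfold sgnPow; positivity

lemma sgnPow_monotone {a : ℝ} (ha : 0 < a) : Monotone (sgnPow a) := by
  have hpos : MonotoneOn (sgnPow a) (Set.Ici 0) := by
    intro z hz w hw hzw
    rcases (Set.mem_Ici.1 hz).eq_or_lt with rfl | hz
    · rw [sgnPow_zero]; exact sgnPow_nonneg hw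
    · rw [sgnPow_of_pos hz, sgnPow_of_pos (hz.trans_le hzw)]
      exact Real.rpow_le_rpow hz.le hzw ha.le
  intro z w hzw
  rcases le_total 0 z with hz | hz
  · exact hpos hz (hz.trans hzw) hzw
  rcases le_total 0 w with hw | hw
  · have hzneg : 0 ≤ -sgnPow a z := sgnPow_neg a z ▸ sgnPow_nonneg (neg_nonneg.2 hz)
    linarith [sgnPow_nonneg (a := a) hw]
  · have hneg := hpos (neg_nonneg.2 hw) (neg_nonneg.2 hz) (neg_le_neg hzw)
    rw [sgnPow_neg, sgnPow_neg] at hneg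
    linarith

lemma sub_mul_sgnPow_sub_nonneg {a : ℝ} (ha : 0 < a) (z w : ℝ) :
    0 ≤ (w - z) * (sgnPow a w - sgnPow a z) := by
  rcases le_total z w with h | h
  · exact mul_nonneg (sub_nonneg.2 h) (sub_nonneg.2 (sgnPow_monotone ha h))
  · exact mul_nonneg_of_nonpos_of_nonpos (sub_nonpos.2 h) (sub_nonpos.2 (sgnPow_monotone ha h))

lemma abs_sgnPow {a : ℝ} (ha : a ≠ 0) (z : ℝ) : |sgnPow a z| = |z| ^ a := by
  rcases eq_or_ne z 0 with rfl | hz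
  · simp [sgnPow, Real.zero_rpow ha]
  · rw [sgnPow, abs_mul, abs_of_nonneg (by positivity),
      ← Real.rpow_add_one (abs_ne_zero.2 hz), sub_add_cancel]

lemma mul_sgnPow_sub_one {p : ℝ} (hp : p ≠ 0) (z : ℝ) : z * sgnPow (p - 1) z = |z| ^ p := by
  rcases eq_or_ne z 0 with rfl | hz
  · simp [sgnPow, Real.zero_rpow hp]
  · have hz' := abs_ne_zero.2 hz
    have hpow : |z| ^ p = |z| ^ (p - 1 - 1) * (|z| * |z|) := by
      rw [← mul_assoc, ← Real.rpow_add_one hz', ← Real.rpow_add_one hz']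
      ring_nf
    rw [sgnPow, hpow, abs_mul_abs_self]
    ring

lemma measurable_sgnPow (a : ℝ) : Measurable (sgnPow a) := by
  unfold sgnPow; fun_prop

section Integrals

variable {X : Type*} [MeasurableSpace X] {ν : Measure X}

lemma ofReal_integral_le_lintegral_ofReal {f : X → ℝ} (hf : 0 ≤ᵐ[ν] f) :
    ENNReal.ofReal (∫ x, f x ∂ν) ≤ ∫⁻ x, ENNReal.ofReal (f x) ∂ν := by
  by_cases hfi : Integrable f ν
  · exact (ofReal_integral_eq_lintegral_ofReal hfi hf).le
  · simp [integral_undef hfi]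

lemma ae_le_toReal_eLpNorm_top {f : X → ℝ} (hf : MemLp f ⊤ ν) :
    ∀ᵐ x ∂ν, f x ≤ (eLpNorm f ⊤ ν).toReal := by
  filter_upwards [ae_le_eLpNormEssSup (f := f) (μ := ν)] with x hx
  rw [eLpNorm_exponent_top]
  calc f x ≤ ‖f x‖ := Real.le_norm_self _
    _ = (‖f x‖ₑ).toReal := by simp
    _ ≤ (eLpNormEssSup f ν).toReal := ENNReal.toReal_mono (by simpa using hf.2.ne) hx

lemma abs_integral_mul_le {p q : ℝ} (hpq : p.HolderConjugate q) {f w : X → ℝ}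
    (hf : AEStronglyMeasurable f ν) (hw0 : ∀ x, 0 ≤ w x) (hw : Integrable w ν)
    (hfw : Integrable (fun x => |f x| ^ p * w x) ν) :
    |∫ x, f x * w x ∂ν| ≤ (∫ x, |f x| ^ p * w x ∂ν) ^ (1 / p) * (∫ x, w x ∂ν) ^ (1 / q) := by
  have hp := hpq.pos
  have hq := hpq.symm.pos
  have hwp : ∀ x, (w x ^ (1 / p)) ^ p = w x := fun x => by
    rw [← Real.rpow_mul (hw0 x), one_div_mul_cancel hp.ne', Real.rpow_one]
  have hwq : ∀ x, (w x ^ (1 / q)) ^ q = w x := fun x => by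
    rw [← Real.rpow_mul (hw0 x), one_div_mul_cancel hq.ne', Real.rpow_one]
  have hF : MemLp (fun x => |f x| * w x ^ (1 / p)) (ENNReal.ofReal p) ν := by
    refine (integrable_norm_rpow_iff
      (hf.norm.mul (hw.1.aemeasurable.pow_const _).aestronglyMeasurable)
      (by simpa using hp) ENNReal.ofReal_ne_top).1 ?_
    refine hfw.congr (ae_of_all _ fun x => ?_)
    simp only [Pi.mul_apply, Real.norm_eq_abs, ENNReal.toReal_ofReal hp.le]
    rw [abs_of_nonneg (mul_nonneg (abs_nonneg _) (Real.rpow_nonneg (hw0 x) _)),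
      Real.mul_rpow (abs_nonneg _) (Real.rpow_nonneg (hw0 x) _), hwp]
  have hG : MemLp (fun x => w x ^ (1 / q)) (ENNReal.ofReal q) ν := by
    refine (integrable_norm_rpow_iff (hw.1.aemeasurable.pow_const _).aestronglyMeasurable
      (by simpa using hq) ENNReal.ofReal_ne_top).1 ?_
    refine hw.congr (ae_of_all _ fun x => ?_)
    simp only [Real.norm_eq_abs, ENNReal.toReal_ofReal hq.le]
    rw [abs_of_nonneg (Real.rpow_nonneg (hw0 x) _), hwq]
  have holder := integral_mul_le_Lp_mul_Lq_of_nonneg hpq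
    (ae_of_all _ fun x => mul_nonneg (abs_nonneg _) (Real.rpow_nonneg (hw0 x) _))
    (ae_of_all _ fun x => Real.rpow_nonneg (hw0 x) _) hF hG
  have hsplit : ∀ x, |f x| * w x ^ (1 / p) * w x ^ (1 / q) = |f x| * w x := fun x => by
    rw [mul_assoc, ← Real.rpow_add' (hw0 x) (by rw [hpq.one_div_add_one_div]; norm_num),
      hpq.one_div_add_one_div, div_one, Real.rpow_one]
  simp only [hsplit, Real.mul_rpow (abs_nonneg _) (Real.rpow_nonneg (hw0 _) _), hwp, hwq]
    at holder
  calc |∫ x, f x * w x ∂ν| ≤ ∫ x, |f x| * w x ∂ν := by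
        simpa only [← Real.norm_eq_abs, norm_mul, Real.norm_of_nonneg (hw0 _)]
          using norm_integral_le_integral_norm (fun x => f x * w x)
    _ ≤ _ := holder

lemma integral_integral_sub_mul_sub {f g w : X → ℝ} (hw : Integrable w ν)
    (hfw : Integrable (fun x => f x * w x) ν) (hgw : Integrable (fun x => g x * w x) ν)
    (hfgw : Integrable (fun x => f x * g x * w x) ν) :
    ∫ x, (∫ y, (f y - f x) * (g y - g x) * w y ∂ν) * w x ∂ν =
      2 * ((∫ x, w x ∂ν) * (∫ x, f x * g x * w x ∂ν) -
        (∫ x, f x * w x ∂ν) * ∫ x, g x * w x ∂ν) := by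
  set W := ∫ x, w x ∂ν
  set A := ∫ x, f x * g x * w x ∂ν
  set F := ∫ x, f x * w x ∂ν
  set G := ∫ x, g x * w x ∂ν
  have hinner : ∀ x, ∫ y, (f y - f x) * (g y - g x) * w y ∂ν =
      A - f x * G - g x * F + f x * g x * W := by
    intro x
    have hexpand : ∀ y, (f y - f x) * (g y - g x) * w y =
        f y * g y * w y - f x * (g y * w y) - g x * (f y * w y) + f x * g x * w y :=
      fun y => by ring
    simp only [hexpand]
    rw [integral_add _ (hw.const_mul _), integral_sub _ (hfw.const_mul _),
      integral_sub hfgw (hgw.const_mul _), integral_const_mul, integral_const_mul,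
      integral_const_mul]
    · exact hfgw.sub (hgw.const_mul _)
    · exact (hfgw.sub (hgw.const_mul _)).sub (hfw.const_mul _)
  have hexpand : ∀ x, (A - f x * G - g x * F + f x * g x * W) * w x =
      A * w x - G * (f x * w x) - F * (g x * w x) + W * (f x * g x * w x) := fun x => by ring
  simp only [hinner, hexpand]
  rw [integral_add _ (hfgw.const_mul _), integral_sub _ (hgw.const_mul _),
    integral_sub (hw.const_mul _) (hfw.const_mul _), integral_const_mul, integral_const_mul,
    integral_const_mul, integral_const_mul]
  · ring
  · exact (hw.const_mul _).sub (hfw.const_mul _)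
  · exact ((hw.const_mul _).sub (hfw.const_mul _)).sub (hgw.const_mul _)

lemma integrable_sgnPow_mul {a p : ℝ} (ha : 0 < a) (hap : a ≤ p) {v w : X → ℝ}
    (hv : AEStronglyMeasurable v ν) (hw0 : ∀ x, 0 ≤ w x) (hw : Integrable w ν)
    (hvp : Integrable (fun x => |v x| ^ p * w x) ν) :
    Integrable (fun x => sgnPow a (v x) * w x) ν := by
  refine (hw.add hvp).mono' ((measurable_sgnPow a).comp_aemeasurable hv.aemeasurable
    |>.aestronglyMeasurable.mul hw.1) (ae_of_all _ fun x => ?_)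
  have hpow : |v x| ^ a ≤ 1 + |v x| ^ p := by
    rcases le_total |v x| 1 with h | h
    · linarith [Real.rpow_le_one (abs_nonneg (v x)) h ha.le, Real.rpow_nonneg (abs_nonneg (v x)) p]
    · linarith [Real.rpow_le_rpow_of_exponent_le h hap]
  rw [Pi.add_apply, norm_mul, Real.norm_eq_abs, abs_sgnPow ha.ne', Real.norm_of_nonneg (hw0 x)]
  nlinarith [hw0 x]

lemma integral_restrict_mul_sgnPow_le {p q : ℝ} (hpq : p.HolderConjugate q) {Ω : Set X}
    (hΩ : MeasurableSet Ω) {v w : X → ℝ} (hv : AEStronglyMeasurable v ν) (hw0 : ∀ x, 0 ≤ w x)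
    (hw : Integrable w ν)
    (hvp : Integrable (fun x => |v x| ^ p * w x) ν) (hvw : Integrable (fun x => v x * w x) ν)
    (hmean : ∫ x, v x * w x ∂ν = 0) (hm : 0 < ∫ x in Ω, w x ∂ν) :
    (∫ x in Ω, v x * w x ∂ν) * (∫ x in Ω, sgnPow (p - 1) (v x) * w x ∂ν) ≤
      (∫ x in Ω, w x ∂ν) * (((∫ x in Ωᶜ, w x ∂ν) / ∫ x in Ω, w x ∂ν) ^ (1 / q) *
        (((∫ x in Ω, |v x| ^ p * w x ∂ν) ^ (1 / p)) ^ (p - 1) *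
          (∫ x in Ωᶜ, |v x| ^ p * w x ∂ν) ^ (1 / p))) := by
  set m := ∫ x in Ω, w x ∂ν
  set mc := ∫ x in Ωᶜ, w x ∂ν
  set I := ∫ x in Ω, |v x| ^ p * w x ∂ν
  set Ic := ∫ x in Ωᶜ, |v x| ^ p * w x ∂ν
  have hmc : 0 ≤ mc := integral_nonneg hw0
  have hI : 0 ≤ I := integral_nonneg fun x => mul_nonneg (by positivity) (hw0 x)
  have hIc : 0 ≤ Ic := integral_nonneg fun x => mul_nonneg (by positivity) (hw0 x)
  have hcompl : ∫ x in Ω, v x * w x ∂ν = -∫ x in Ωᶜ, v x * w x ∂ν := by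
    linarith [integral_add_compl hΩ hvw]
  have hc := abs_integral_mul_le hpq hv.restrict hw0 hw.restrict (hvp.restrict (s := Ωᶜ))
  have hφq : ∀ x, |sgnPow (p - 1) (v x)| ^ q * w x = |v x| ^ p * w x := fun x => by
    rw [abs_sgnPow hpq.sub_one_ne_zero, ← Real.rpow_mul (abs_nonneg _), hpq.sub_one_mul_conj]
  have hb := abs_integral_mul_le hpq.symm
    ((measurable_sgnPow _).comp_aemeasurable hv.aemeasurable).aestronglyMeasurable.restrict
    hw0 hw.restrict ((hvp.restrict (s := Ω)).congr (ae_of_all _ fun x => (hφq x).symm))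
  simp only [Function.comp_apply, hφq] at hb
  have hIq : (I ^ (1 / p)) ^ (p - 1) = I ^ (1 / q) := by
    rw [← Real.rpow_mul hI, one_div q, ← hpq.one_sub_inv]
    field_simp [hpq.ne_zero]
  have hmpq : m ^ (1 / p) * m ^ (1 / q) = m := by
    rw [← Real.rpow_add hm, hpq.one_div_add_one_div, div_one, Real.rpow_one]
  have hmq_pos := Real.rpow_pos_of_pos hm (1 / q)
  calc _ ≤ |∫ x in Ω, v x * w x ∂ν| * |∫ x in Ω, sgnPow (p - 1) (v x) * w x ∂ν| := by
        rw [← abs_mul]; exact le_abs_self _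
    _ ≤ (Ic ^ (1 / p) * mc ^ (1 / q)) * (I ^ (1 / q) * m ^ (1 / p)) := by
        rw [hcompl, abs_neg]
        exact mul_le_mul hc hb (abs_nonneg _)
          (mul_nonneg (Real.rpow_nonneg hIc _) (Real.rpow_nonneg hmc _))
    _ = _ := by
        rw [hIq, Real.div_rpow hmc hm.le]
        field_simp
        linear_combination (Ic ^ (1 / p) * mc ^ (1 / q) * I ^ (1 / q)) * hmpq

end Integrals

lemma le_diam_rpow_mul_div_norm_rpow {E : Type*} [NormedAddCommGroup E] {Ω : Set E}
    (hΩ : Bornology.IsBounded Ω) {s k : ℝ} (hs : 0 ≤ s) (hk : 0 ≤ k) {x y : E} (hx : x ∈ Ω)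
    (hy : y ∈ Ω) (hxy : y ≠ x) :
    k ≤ Metric.diam Ω ^ s * (k / ‖y - x‖ ^ s) := by
  have hr : 0 < ‖y - x‖ ^ s := Real.rpow_pos_of_pos (norm_pos_iff.2 (sub_ne_zero.2 hxy)) s
  rw [mul_div_assoc', le_div_iff₀ hr, mul_comm]
  gcongr
  rw [← dist_eq_norm]
  exact Metric.dist_le_diam_of_mem hΩ hy hx

section Kernel

variable {E : Type*} [NormedAddCommGroup E] [MeasurableSpace E]

/-- The paper's `D_p(v)(x)`, for the kernel `|y - x| ^ (-s)`; the fractional Laplacian of order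
`α` on `ℝ^d` has `s = d + α`. -/
noncomputable def pDissipation (ν : Measure E) (s p : ℝ) (v : E → ℝ) (x : E) : ℝ≥0∞ :=
  (1 / 2) * ∫⁻ y, ENNReal.ofReal
    ((v y - v x) * (sgnPow (p - 1) (v y) - sgnPow (p - 1) (v x)) / ‖y - x‖ ^ s) ∂ν

variable {ν : Measure E}

lemma lintegral_restrict_ofReal_mul_le {Ω : Set E} (hΩ : MeasurableSet Ω)
    (hΩb : Bornology.IsBounded Ω) {s N : ℝ} (hs : 0 ≤ s) {k w : E → ℝ} (hk : ∀ y, 0 ≤ k y)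
    (hw0 : ∀ y, 0 ≤ w y) (hwN : ∀ᵐ y ∂ν.restrict Ω, w y ≤ N) {x : E} (hx : x ∈ Ω)
    (hkx : k x = 0) :
    ∫⁻ y in Ω, ENNReal.ofReal (k y * w y) ∂ν ≤
      ENNReal.ofReal (Metric.diam Ω ^ s * N) * ∫⁻ y, ENNReal.ofReal (k y / ‖y - x‖ ^ s) ∂ν := by
  rw [← lintegral_const_mul' _ _ ENNReal.ofReal_ne_top]
  refine (lintegral_mono_ae ?_).trans (lintegral_mono' Measure.restrict_le_self le_rfl)
  filter_upwards [hwN, ae_restrict_mem hΩ] with y hyN hy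
  have hN := (hw0 y).trans hyN
  rw [← ENNReal.ofReal_mul (mul_nonneg (Real.rpow_nonneg Metric.diam_nonneg _) hN)]
  refine ENNReal.ofReal_le_ofReal ?_
  rcases eq_or_ne y x with rfl | hxy
  · simp [hkx]
  calc k y * w y ≤ k y * N := mul_le_mul_of_nonneg_left hyN (hk y)
    _ ≤ Metric.diam Ω ^ s * (k y / ‖y - x‖ ^ s) * N :=
        mul_le_mul_of_nonneg_right (le_diam_rpow_mul_div_norm_rpow hΩb hs (hk y) hx hy hxy) hN
    _ = _ := by ring

lemma ofReal_integral_integral_le {Ω : Set E} (hΩ : MeasurableSet Ω)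
    (hΩb : Bornology.IsBounded Ω) {s : ℝ} (hs : 0 ≤ s) {w : E → ℝ} (hw0 : ∀ y, 0 ≤ w y)
    (hw : MemLp w ⊤ (ν.restrict Ω)) {K : E → E → ℝ} (hK : ∀ x y, 0 ≤ K x y)
    (hKdiag : ∀ x, K x x = 0) :
    ENNReal.ofReal (∫ x in Ω, (∫ y in Ω, K x y * w y ∂ν) * w x ∂ν) ≤
      ENNReal.ofReal (Metric.diam Ω ^ s * (eLpNorm w ⊤ (ν.restrict Ω)).toReal) *
        ∫⁻ x in Ω, (∫⁻ y, ENNReal.ofReal (K x y / ‖y - x‖ ^ s) ∂ν) * ENNReal.ofReal (w x) ∂ν := by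
  have hinner : ∀ x, 0 ≤ ∫ y in Ω, K x y * w y ∂ν :=
    fun x => integral_nonneg fun y => mul_nonneg (hK x y) (hw0 y)
  rw [← lintegral_const_mul' _ _ ENNReal.ofReal_ne_top]
  refine (ofReal_integral_le_lintegral_ofReal (ae_of_all _ fun x =>
    mul_nonneg (hinner x) (hw0 x))).trans (lintegral_mono_ae ?_)
  filter_upwards [ae_restrict_mem hΩ] with x hx
  rw [ENNReal.ofReal_mul (hinner x), ← mul_assoc]
  gcongr
  exact (ofReal_integral_le_lintegral_ofReal
    (ae_of_all _ fun y => mul_nonneg (hK x y) (hw0 y))).trans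
    (lintegral_restrict_ofReal_mul_le hΩ hΩb hs (hK x) hw0 (ae_le_toReal_eLpNorm_top hw) hx
      (hKdiag x))

lemma ofReal_half_integral_integral_le_lintegral_pDissipation {Ω : Set E}
    (hΩ : MeasurableSet Ω) (hΩb : Bornology.IsBounded Ω) {s p : ℝ} (hs : 0 ≤ s) (hp : 1 < p)
    {w : E → ℝ} (hw0 : ∀ y, 0 ≤ w y) (hw : MemLp w ⊤ (ν.restrict Ω)) (v : E → ℝ) :
    ENNReal.ofReal ((∫ x in Ω, (∫ y in Ω, (v y - v x) *
        (sgnPow (p - 1) (v y) - sgnPow (p - 1) (v x)) * w y ∂ν) * w x ∂ν) / 2) ≤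
      ENNReal.ofReal (Metric.diam Ω ^ s * (eLpNorm w ⊤ (ν.restrict Ω)).toReal) *
        ∫⁻ x in Ω, pDissipation ν s p v x * ENNReal.ofReal (w x) ∂ν := by
  have hbound := ofReal_integral_integral_le hΩ hΩb hs hw0 hw
    (K := fun x y => (v y - v x) * (sgnPow (p - 1) (v y) - sgnPow (p - 1) (v x)))
    (fun x y => sub_mul_sgnPow_sub_nonneg (by linarith) _ _) (fun x => by simp)
  simp_rw [pDissipation, mul_assoc (1 / 2 : ℝ≥0∞)]
  rw [lintegral_const_mul' _ _ (by simp), ENNReal.ofReal_div_of_pos two_pos, ENNReal.ofReal_ofNat,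
    ENNReal.div_eq_inv_mul, one_div, mul_left_comm]
  gcongr

end Kernel

lemma ofReal_le_div_mul_add_of_mul_sub_le {m I c E K : ℝ} {P : ℝ≥0∞} (hm : 0 < m)
    (hc : c ≤ m * E) (hK : ENNReal.ofReal (m * I - c) ≤ ENNReal.ofReal K * P) :
    ENNReal.ofReal I ≤ ENNReal.ofReal (K / m) * P + ENNReal.ofReal E := by
  rw [← ENNReal.mul_le_mul_iff_right (ENNReal.ofReal_pos.2 hm).ne' ENNReal.ofReal_ne_top,
    mul_add, ← mul_assoc, ← ENNReal.ofReal_mul hm.le, ← ENNReal.ofReal_mul hm.le,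
    ← ENNReal.ofReal_mul hm.le, mul_div_cancel₀ _ hm.ne']
  calc ENNReal.ofReal (m * I) ≤ ENNReal.ofReal (m * I - c) + ENNReal.ofReal (m * E) :=
        (ENNReal.ofReal_le_ofReal (by linarith)).trans ENNReal.ofReal_add_le
    _ ≤ _ := by gcongr

theorem stmt16_general (d : ℕ) (α p q : ℝ) (hα : 0 < α ∧ α < 2) (hp : 1 < p)
    (hq : q = p / (p - 1))
    (μ : EuclideanSpace ℝ (Fin d) → ℝ) (hμ0 : ∀ x, 0 ≤ μ x) (hμint : Integrable μ)
    (hμloc : ∀ K : Set (EuclideanSpace ℝ (Fin d)), Bornology.IsBounded K →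
      MemLp μ ⊤ (volume.restrict K))
    (Ω : Set (EuclideanSpace ℝ (Fin d))) (hΩmeas : MeasurableSet Ω)
    (hΩbdd : Bornology.IsBounded Ω) (hμΩ : 0 < ∫ x in Ω, μ x)
    (v : EuclideanSpace ℝ (Fin d) → ℝ) (hv : Measurable v)
    (hvp : Integrable (fun x => |v x| ^ p * μ x))
    (hvμ : Integrable (fun x => v x * μ x)) (hmean : ∫ x, v x * μ x = 0) :
    ENNReal.ofReal (∫ x in Ω, |v x| ^ p * μ x) ≤
      ENNReal.ofReal (Metric.diam Ω ^ ((d : ℝ) + α) *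
          ((eLpNorm μ ⊤ (volume.restrict Ω)).toReal / ∫ y in Ω, μ y)) *
        (∫⁻ x in Ω,
          (1 / 2) * (∫⁻ y : EuclideanSpace ℝ (Fin d),
            ENNReal.ofReal ((v y - v x) * (sgnPow (p - 1) (v y) - sgnPow (p - 1) (v x)) /
              ‖y - x‖ ^ ((d : ℝ) + α))) * ENNReal.ofReal (μ x)) +
      ENNReal.ofReal (((∫ y in Ωᶜ, μ y) / ∫ y in Ω, μ y) ^ (1 / q) *
        (((∫ x in Ω, |v x| ^ p * μ x) ^ (1 / p)) ^ (p - 1) *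
          (∫ x in Ωᶜ, |v x| ^ p * μ x) ^ (1 / p))) := by
  have hpq : p.HolderConjugate q := (Real.holderConjugate_iff_eq_conjExponent hp).2 hq
  have hs : (0 : ℝ) ≤ d + α := add_nonneg d.cast_nonneg hα.1.le
  have hφ := integrable_sgnPow_mul hpq.sub_one_pos (by linarith) hv.aestronglyMeasurable hμ0
    hμint hvp
  have henergy := integral_integral_sub_mul_sub hμint.restrict hvμ.restrict
    (hφ.restrict (s := Ω))
    ((hvp.restrict (s := Ω)).congr (ae_of_all _ fun x => by
      simp only [mul_sgnPow_sub_one hpq.ne_zero]))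
  simp only [mul_sgnPow_sub_one hpq.ne_zero] at henergy
  have hcross := integral_restrict_mul_sgnPow_le hpq hΩmeas hv.aestronglyMeasurable hμ0 hμint hvp
    hvμ hmean hμΩ
  have hdiss := ofReal_half_integral_integral_le_lintegral_pDissipation (ν := volume) hΩmeas
    hΩbdd hs hp hμ0 (hμloc Ω hΩbdd) v
  rw [henergy, mul_div_cancel_left₀ _ two_ne_zero] at hdiss
  rw [← mul_div_assoc]
  exact ofReal_le_div_mul_add_of_mul_sub_le hμΩ hcross hdiss

theorem stmt16 (d : ℕ) (hd : 0 < d) (α p q : ℝ) (hα : 0 < α ∧ α < 2) (hp : 1 < p)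
    (hq : q = p / (p - 1))
    (μ : EuclideanSpace ℝ (Fin d) → ℝ) (hμ0 : ∀ x, 0 ≤ μ x) (hμint : Integrable μ)
    (hμloc : ∀ K : Set (EuclideanSpace ℝ (Fin d)), Bornology.IsBounded K →
      MemLp μ ⊤ (volume.restrict K))
    (Ω : Set (EuclideanSpace ℝ (Fin d))) (hΩmeas : MeasurableSet Ω)
    (hΩbdd : Bornology.IsBounded Ω) (hμΩ : 0 < ∫ x in Ω, μ x)
    (v : EuclideanSpace ℝ (Fin d) → ℝ) (hv : Measurable v)
    (hvp : Integrable (fun x => |v x| ^ p * μ x))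
    (hvμ : Integrable (fun x => v x * μ x)) (hmean : ∫ x, v x * μ x = 0) :
    ENNReal.ofReal (∫ x in Ω, |v x| ^ p * μ x) ≤
      ENNReal.ofReal (Metric.diam Ω ^ ((d : ℝ) + α) *
          ((eLpNorm μ ⊤ (volume.restrict Ω)).toReal / ∫ y in Ω, μ y)) *
        (∫⁻ x in Ω,
          (1 / 2) * (∫⁻ y : EuclideanSpace ℝ (Fin d),
            ENNReal.ofReal ((v y - v x) * (sgnPow (p - 1) (v y) - sgnPow (p - 1) (v x)) /
              ‖y - x‖ ^ ((d : ℝ) + α))) * ENNReal.ofReal (μ x)) +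
      ENNReal.ofReal (((∫ y in Ωᶜ, μ y) / ∫ y in Ω, μ y) ^ (1 / q) *
        (((∫ x in Ω, |v x| ^ p * μ x) ^ (1 / p)) ^ (p - 1) *
          (∫ x in Ωᶜ, |v x| ^ p * μ x) ^ (1 / p))) :=
  stmt16_general d α p q hα hp hq μ hμ0 hμint hμloc Ω hΩmeas hΩbdd hμΩ v hv hvp hvμ hmean
end
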